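/- arXiv:2605.16047 — 2 statements merged into one kernel-verified Lean document; each statement's English description precedes it below -/
import Mathlib

section
/- Let Z be a nonempty closed convex subset of a real Hilbert space with diameter at most D, let η > 0, and let f_1,…,f_B : Z → ℝ be convex functions. Consider the projected online gradient iterates u_1 ∈ Z and u_{b+1} = Π_Z(u_b − η g_b), where g_b satisfies the subgradient inequality f_b(z) ≥ f_b(u_b) + ⟨g_b, z − u_b⟩ for all z ∈ Z and ‖g_b‖ ≤ G. Then for any comparator sequence u*_1,…,u*_B ∈ Z, Σ_{b=1}^B (f_b(u_b) − f_b(u*_b)) ≤ D²/(2η) + (D/η) Σ_{b=2}^B ‖u*_b − u*_{b−1}‖ + (η/2) G² B. -/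
open Finset

/-- **Dynamic regret of projected online gradient descent.**
Let `Z` be a nonempty closed convex subset of a real Hilbert space with diameter at most `D`,
`η > 0`, and `f_1, …, f_B` convex functions on `Z`.  Consider projected online gradient
iterates `u_1 ∈ Z`, `u_{b+1} = Π_Z (u_b − η g_b)`, where each `g_b` is a subgradient of `f_b`
at `u_b` on `Z` with `‖g_b‖ ≤ G`.  Then for any comparator sequence `u*_1, …, u*_B ∈ Z`,
`∑_{b=1}^B (f_b(u_b) − f_b(u*_b)) ≤ D²/(2η) + (D/η) ∑_{b=2}^B ‖u*_b − u*_{b−1}‖ + (η/2) G² B`. -/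
theorem ogd_dynamic_regret {E : Type*} [NormedAddCommGroup E]
    [InnerProductSpace ℝ E] [CompleteSpace E]
    (Z : Set E) (hZne : Z.Nonempty) (hZcl : IsClosed Z) (hZcv : Convex ℝ Z)
    (D : ℝ) (hD : ∀ x ∈ Z, ∀ y ∈ Z, ‖x - y‖ ≤ D)
    (η : ℝ) (hη : 0 < η) (Bn : ℕ)
    (f : ℕ → E → ℝ) (hf : ∀ b, ConvexOn ℝ Z (f b))
    (P : E → E)
    (hP : ∀ x : E, P x ∈ Z ∧ ∀ z ∈ Z, (inner ℝ (x - P x) (z - P x) : ℝ) ≤ 0)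
    (u g : ℕ → E) (hu1 : u 1 ∈ Z)
    (hrec : ∀ b : ℕ, 1 ≤ b → u (b + 1) = P (u b - η • g b))
    (hsub : ∀ b ∈ Finset.Icc 1 Bn, ∀ z ∈ Z, f b (u b) + (inner ℝ (g b) (z - u b) : ℝ) ≤ f b z)
    (G : ℝ) (hG : ∀ b ∈ Finset.Icc 1 Bn, ‖g b‖ ≤ G)
    (ustar : ℕ → E) (hustar : ∀ b ∈ Finset.Icc 1 Bn, ustar b ∈ Z) :
    ∑ b ∈ Finset.Icc 1 Bn, (f b (u b) - f b (ustar b))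
      ≤ D ^ 2 / (2 * η) + (D / η) * (∑ b ∈ Finset.Icc 2 Bn, ‖ustar b - ustar (b - 1)‖)
        + (η / 2) * G ^ 2 * Bn := by
  have hD0 : 0 ≤ D := by
    obtain ⟨z, hz⟩ := hZne
    simpa using hD z hz z hz
  -- projection moves points closer to any point of Z
  have hPle : ∀ x : E, ∀ z ∈ Z, ‖P x - z‖ ≤ ‖x - z‖ := by
    intro x z hz
    have h1 := (hP x).2 z hz
    have h2 : (0:ℝ) ≤ inner ℝ (x - P x) (P x - z) := by
      have hrw : (inner ℝ (x - P x) (P x - z) : ℝ) = - inner ℝ (x - P x) (z - P x) := by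
        rw [← inner_neg_right]
        congr 1
        abel
      rw [hrw]
      linarith
    have key : ‖P x - z‖ ^ 2 ≤ ‖x - z‖ ^ 2 := by
      have hsplit : x - z = (x - P x) + (P x - z) := by abel
      have expand : ‖x - z‖ ^ 2
          = ‖x - P x‖ ^ 2 + 2 * inner ℝ (x - P x) (P x - z) + ‖P x - z‖ ^ 2 := by
        rw [hsplit, norm_add_sq_real]
      nlinarith [sq_nonneg ‖x - P x‖]
    calc ‖P x - z‖ = Real.sqrt (‖P x - z‖ ^ 2) := by
          rw [Real.sqrt_sq (norm_nonneg _)]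
      _ ≤ Real.sqrt (‖x - z‖ ^ 2) := Real.sqrt_le_sqrt key
      _ = ‖x - z‖ := Real.sqrt_sq (norm_nonneg _)
  -- the iterates stay in Z
  have huZ : ∀ b, 1 ≤ b → u b ∈ Z := by
    intro b hb
    induction b, hb using Nat.le_induction with
    | base => exact hu1
    | succ n hn _ => rw [hrec n hn]; exact (hP _).1
  -- per-step inequality (multiplied by 2η)
  have step : ∀ b, 1 ≤ b → b ≤ Bn →
      2 * η * (f b (u b) - f b (ustar b))
        ≤ ‖u b - ustar b‖ ^ 2 - ‖u (b + 1) - ustar b‖ ^ 2 + η ^ 2 * G ^ 2 := by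
    intro b hb1 hbB
    have hb : b ∈ Finset.Icc 1 Bn := Finset.mem_Icc.mpr ⟨hb1, hbB⟩
    have hsZ : ustar b ∈ Z := hustar b hb
    have hs := hsub b hb (ustar b) hsZ
    have hinner : f b (u b) - f b (ustar b) ≤ (inner ℝ (g b) (u b - ustar b) : ℝ) := by
      have : (inner ℝ (g b) (u b - ustar b) : ℝ) = - inner ℝ (g b) (ustar b - u b) := by
        rw [← inner_neg_right]
        congr 1
        abel
      rw [this]
      linarith
    have hid : ‖u b - η • g b - ustar b‖ ^ 2
        = ‖u b - ustar b‖ ^ 2 - 2 * η * (inner ℝ (g b) (u b - ustar b) : ℝ)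
          + η ^ 2 * ‖g b‖ ^ 2 := by
      have h1 : u b - η • g b - ustar b = (u b - ustar b) - η • g b := by abel
      rw [h1, norm_sub_sq_real, inner_smul_right, norm_smul, Real.norm_eq_abs,
        abs_of_pos hη, real_inner_comm]
      ring
    have hproj : ‖u (b + 1) - ustar b‖ ≤ ‖u b - η • g b - ustar b‖ := by
      rw [hrec b hb1]
      exact hPle _ _ hsZ
    have hproj2 : ‖u (b + 1) - ustar b‖ ^ 2 ≤ ‖u b - η • g b - ustar b‖ ^ 2 :=
      pow_le_pow_left₀ (norm_nonneg _) hproj 2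
    have hg2 : ‖g b‖ ^ 2 ≤ G ^ 2 := pow_le_pow_left₀ (norm_nonneg _) (hG b hb) 2
    nlinarith [sq_nonneg η]
  -- main claim by induction
  have claim : ∀ n, 1 ≤ n → n ≤ Bn →
      2 * η * ∑ b ∈ Finset.Icc 1 n, (f b (u b) - f b (ustar b))
        ≤ ‖u 1 - ustar 1‖ ^ 2 - ‖u (n + 1) - ustar n‖ ^ 2
          + 2 * D * (∑ b ∈ Finset.Icc 2 n, ‖ustar b - ustar (b - 1)‖)
          + η ^ 2 * G ^ 2 * n := by
    intro n hn1 hnB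
    induction n, hn1 using Nat.le_induction with
    | base =>
      simp only [Finset.Icc_self, Finset.sum_singleton, show Finset.Icc 2 1 = ∅ from rfl,
        Finset.sum_empty, Nat.cast_one]
      have := step 1 le_rfl hnB
      linarith
    | succ n hn ih =>
      have hnB' : n ≤ Bn := le_trans (Nat.le_succ n) hnB
      have ih' := ih hnB'
      have hs1 : ∑ b ∈ Finset.Icc 1 (n + 1), (f b (u b) - f b (ustar b))
          = (∑ b ∈ Finset.Icc 1 n, (f b (u b) - f b (ustar b)))
            + (f (n + 1) (u (n + 1)) - f (n + 1) (ustar (n + 1))) :=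
        Finset.sum_Icc_succ_top (by omega) _
      have hs2 : ∑ b ∈ Finset.Icc 2 (n + 1), ‖ustar b - ustar (b - 1)‖
          = (∑ b ∈ Finset.Icc 2 n, ‖ustar b - ustar (b - 1)‖)
            + ‖ustar (n + 1) - ustar n‖ :=
        Finset.sum_Icc_succ_top (by omega) _
      have hstep := step (n + 1) (by omega) hnB
      -- cross term
      have hmemn : n ∈ Finset.Icc 1 Bn := Finset.mem_Icc.mpr ⟨hn, hnB'⟩
      have hmemn1 : n + 1 ∈ Finset.Icc 1 Bn := Finset.mem_Icc.mpr ⟨by omega, hnB⟩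
      have ha : ‖u (n + 1) - ustar (n + 1)‖ ≤ D :=
        hD _ (huZ (n + 1) (by omega)) _ (hustar _ hmemn1)
      have hb : ‖u (n + 1) - ustar n‖ ≤ D :=
        hD _ (huZ (n + 1) (by omega)) _ (hustar _ hmemn)
      have htri : ‖u (n + 1) - ustar (n + 1)‖
          ≤ ‖u (n + 1) - ustar n‖ + ‖ustar (n + 1) - ustar n‖ := by
        have h1 : u (n + 1) - ustar (n + 1)
            = (u (n + 1) - ustar n) - (ustar (n + 1) - ustar n) := by abel
        rw [h1]
        exact norm_sub_le _ _
      have hcross : ‖u (n + 1) - ustar (n + 1)‖ ^ 2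
          ≤ ‖u (n + 1) - ustar n‖ ^ 2 + 2 * D * ‖ustar (n + 1) - ustar n‖ := by
        nlinarith [norm_nonneg (u (n + 1) - ustar n), norm_nonneg (ustar (n + 1) - ustar n),
          norm_nonneg (u (n + 1) - ustar (n + 1))]
      rw [hs1, hs2]
      push_cast
      nlinarith [hstep, ih', hcross]
  -- conclude
  rcases Nat.eq_zero_or_pos Bn with h0 | hpos
  · subst h0
    simp only [show Finset.Icc 1 0 = ∅ from rfl, show Finset.Icc 2 0 = ∅ from rfl,
      Finset.sum_empty, Nat.cast_zero]
    have : (0:ℝ) ≤ D ^ 2 / (2 * η) := by positivity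
    linarith
  · have hcl := claim Bn hpos le_rfl
    have hmem1 : (1:ℕ) ∈ Finset.Icc 1 Bn := Finset.mem_Icc.mpr ⟨le_rfl, hpos⟩
    have h1D : ‖u 1 - ustar 1‖ ≤ D := hD _ hu1 _ (hustar _ hmem1)
    have h1D2 : ‖u 1 - ustar 1‖ ^ 2 ≤ D ^ 2 :=
      pow_le_pow_left₀ (norm_nonneg _) h1D 2
    have hlast : (0:ℝ) ≤ ‖u (Bn + 1) - ustar Bn‖ ^ 2 := sq_nonneg _
    set S := ∑ b ∈ Finset.Icc 1 Bn, (f b (u b) - f b (ustar b)) with hS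
    set T := ∑ b ∈ Finset.Icc 2 Bn, ‖ustar b - ustar (b - 1)‖ with hT
    have h2η : (0:ℝ) < 2 * η := by linarith
    have hA : 2 * η * S ≤ D ^ 2 + 2 * D * T + η ^ 2 * G ^ 2 * Bn := by linarith
    have hrw : D ^ 2 / (2 * η) + (D / η) * T + (η / 2) * G ^ 2 * Bn
        = (D ^ 2 + 2 * D * T + η ^ 2 * G ^ 2 * Bn) / (2 * η) := by
      field_simp
    rw [hrw, le_div_iff₀ h2η]
    linarith
end

section
/- Let Z be a nonempty closed convex subset of a real Hilbert space, Π_Z the metric projection onto Z, η > 0, q ∈ Z, and M a prediction vector. Set ū = Π_Z(q − η M), let g satisfy the subgradient inequality f(z) ≥ f(ū) + ⟨g, z − ū⟩ for all z ∈ Z for a function f : Z → ℝ, and set q⁺ = Π_Z(q − η g). Then for every u* ∈ Z, f(ū) − f(u*) ≤ (‖q − u*‖² − ‖q⁺ − u*‖²)/(2η) + (η/2)‖g − M‖². -/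
open Finset

/-- **One-step inequality of optimistic (prediction-augmented) projected descent.**
Let `Z` be a nonempty closed convex subset of a real Hilbert space with metric projection
`Π_Z`, `η > 0`, `q ∈ Z`, and `M` a prediction vector.  Set `ū = Π_Z(q − η M)`, let `g`
satisfy the subgradient inequality `f z ≥ f ū + ⟪g, z − ū⟫` for all `z ∈ Z`, and set
`q⁺ = Π_Z(q − η g)`.  Then for every `u* ∈ Z`,
`f ū − f u* ≤ (‖q − u*‖² − ‖q⁺ − u*‖²)/(2η) + (η/2)‖g − M‖²`. -/
theorem optimistic_one_step {E : Type*} [NormedAddCommGroup E]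
    [InnerProductSpace ℝ E] [CompleteSpace E]
    (Z : Set E) (hZne : Z.Nonempty) (hZcl : IsClosed Z) (hZcv : Convex ℝ Z)
    (P : E → E)
    (hP : ∀ x : E, P x ∈ Z ∧ ∀ z ∈ Z, (inner ℝ (x - P x) (z - P x) : ℝ) ≤ 0)
    (η : ℝ) (hη : 0 < η) (q : E) (hq : q ∈ Z) (M : E)
    (ubar : E) (hubar : ubar = P (q - η • M))
    (f : E → ℝ) (g : E)
    (hsub : ∀ z ∈ Z, f ubar + (inner ℝ g (z - ubar) : ℝ) ≤ f z)
    (qplus : E) (hqplus : qplus = P (q - η • g)) :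
    ∀ ustar ∈ Z,
      f ubar - f ustar
        ≤ (‖q - ustar‖ ^ 2 - ‖qplus - ustar‖ ^ 2) / (2 * η) + (η / 2) * ‖g - M‖ ^ 2 := by
  intro ustar hstar
  have hubarZ : ubar ∈ Z := hubar ▸ (hP (q - η • M)).1
  have hqpZ : qplus ∈ Z := hqplus ▸ (hP (q - η • g)).1
  have S1 : (inner ℝ (q - η • M - ubar) (qplus - ubar) : ℝ) ≤ 0 := by
    have := (hP (q - η • M)).2 qplus hqpZ
    rwa [← hubar] at this
  have S2 : (inner ℝ (q - η • g - qplus) (ustar - qplus) : ℝ) ≤ 0 := by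
    have := (hP (q - η • g)).2 ustar hstar
    rwa [← hqplus] at this
  have S3 : f ubar - f ustar ≤ (inner ℝ g (ubar - qplus) : ℝ) + inner ℝ g (qplus - ustar) := by
    have h := hsub ustar hstar
    have hid : (inner ℝ g (ustar - ubar) : ℝ)
        = -((inner ℝ g (ubar - qplus) : ℝ) + inner ℝ g (qplus - ustar)) := by
      simp only [inner_sub_right]; ring
    linarith [h, hid.ge, hid.le]
  -- η * ⟪g, q⁺ - u*⟫ ≤ ⟪q - q⁺, q⁺ - u*⟫
  have hG1 : η * (inner ℝ g (qplus - ustar) : ℝ) ≤ (inner ℝ (q - qplus) (qplus - ustar) : ℝ) := by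
    have hid : (inner ℝ (q - η • g - qplus) (ustar - qplus) : ℝ)
        = -(inner ℝ (q - qplus) (qplus - ustar) : ℝ)
          + η * (inner ℝ g (qplus - ustar) : ℝ) := by
      simp only [inner_sub_left, inner_sub_right, real_inner_smul_left]; ring
    linarith [S2, hid.le, hid.ge]
  -- η * ⟪M, ū - q⁺⟫ ≤ ⟪q - ū, ū - q⁺⟫
  have hGM : η * (inner ℝ M (ubar - qplus) : ℝ) ≤ (inner ℝ (q - ubar) (ubar - qplus) : ℝ) := by
    have hid : (inner ℝ (q - η • M - ubar) (qplus - ubar) : ℝ)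
        = -(inner ℝ (q - ubar) (ubar - qplus) : ℝ)
          + η * (inner ℝ M (ubar - qplus) : ℝ) := by
      simp only [inner_sub_left, inner_sub_right, real_inner_smul_left]; ring
    linarith [S1, hid.le, hid.ge]
  -- Young-type inequality
  have hC : 2 * (η * (inner ℝ (g - M) (ubar - qplus) : ℝ))
      ≤ η ^ 2 * ‖g - M‖ ^ 2 + ‖ubar - qplus‖ ^ 2 := by
    have S4 : (0:ℝ) ≤ ‖η • (g - M) - (ubar - qplus)‖ ^ 2 := sq_nonneg _
    have hexp : ‖η • (g - M) - (ubar - qplus)‖ ^ 2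
        = η ^ 2 * ‖g - M‖ ^ 2 - 2 * (η * (inner ℝ (g - M) (ubar - qplus) : ℝ))
          + ‖ubar - qplus‖ ^ 2 := by
      rw [@norm_sub_sq_real E, real_inner_smul_left, norm_smul, Real.norm_eq_abs,
        mul_pow, sq_abs]
      try ring
    linarith [S4, hexp.le, hexp.ge]
  -- ⟪g, ū - q⁺⟫ = ⟪g - M, ū - q⁺⟫ + ⟪M, ū - q⁺⟫, multiplied by η
  have hsplit : η * (inner ℝ g (ubar - qplus) : ℝ)
      = η * (inner ℝ (g - M) (ubar - qplus) : ℝ) + η * (inner ℝ M (ubar - qplus) : ℝ) := by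
    simp only [inner_sub_left]; ring
  -- cosine identities
  have I1 : 2 * (inner ℝ (q - qplus) (qplus - ustar) : ℝ)
      = ‖q - ustar‖ ^ 2 - ‖q - qplus‖ ^ 2 - ‖qplus - ustar‖ ^ 2 := by
    have := norm_add_sq_real (q - qplus) (qplus - ustar)
    rw [sub_add_sub_cancel] at this
    linarith [this.le, this.ge]
  have I2 : 2 * (inner ℝ (q - ubar) (ubar - qplus) : ℝ)
      = ‖q - qplus‖ ^ 2 - ‖q - ubar‖ ^ 2 - ‖ubar - qplus‖ ^ 2 := by
    have := norm_add_sq_real (q - ubar) (ubar - qplus)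
    rw [sub_add_sub_cancel] at this
    linarith [this.le, this.ge]
  -- the key inequality, cleared of denominators
  have key : (f ubar - f ustar) * (2 * η)
      ≤ ‖q - ustar‖ ^ 2 - ‖qplus - ustar‖ ^ 2 + η ^ 2 * ‖g - M‖ ^ 2 := by
    have hS3η : (f ubar - f ustar) * (2 * η)
        ≤ (2 * η) * ((inner ℝ g (ubar - qplus) : ℝ) + inner ℝ g (qplus - ustar)) := by
      nlinarith [mul_le_mul_of_nonneg_left S3 (by linarith : (0:ℝ) ≤ 2 * η)]
    nlinarith [hS3η, hG1, hGM, hC, hsplit, I1, I2, sq_nonneg ‖q - ubar‖]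
  have h2η : (0:ℝ) < 2 * η := by linarith
  rw [div_add' _ _ _ (ne_of_gt h2η), le_div_iff₀ h2η]
  nlinarith [key]
end
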